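/- Let X be a compact Hausdorff space and E ⊆ C(X) with the pointwise topology. If φ has a periodic point z₁ that is not fixed (φᵖ(z₁) = z₁ for some p ≥ 2 but φ(z₁) ≠ z₁) and δ_{z₁}, δ_{φ(z₁)} are linearly independent on E, then W f = w·(f∘φ) is not τ_p-supercyclic on E. -/

import Mathlib

/-- The evaluation functional at `x` on a subspace `E` of functions on `X`. -/
noncomputable def evalFunctional {X : Type*} (E : Submodule ℂ (X → ℂ)) (x : X) :
    ↥E →ₗ[ℂ] ℂ :=
  (LinearMap.proj x).comp E.subtype

/-- The weighted composition map `f ↦ w · (f ∘ φ)` on functions on `X`. -/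
def weightedComp {X : Type*} (w : X → ℂ) (φ : X → X) : (X → ℂ) → (X → ℂ) :=
  fun f x => w x * f (φ x)

/-!
Evaluation at `z₁` and `φ z₁` is a continuous linear surjection `E → ℂ²` (by linear
independence), so it maps a dense set to a dense set. At a point `x` of period `p` the
iterates satisfy `Wⁿ f (x) = λ^(n / p) · W^(n % p) f (x)`, where the multiplier
`λ = ∏_{j < p} w (φʲ x)` is the same for every point of the orbit. Hence the image of the
projective orbit `{c • Wⁿ f}` lies on the `p` lines through `(Wʳ f (z₁), Wʳ f (φ z₁))`,
`r < p`, and a finite union of lines in `ℂ²` is closed with empty interior.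
-/

open Finset Function Module

theorem LinearMap.pi_surjective_of_linearIndependent {ι K V : Type*} [Finite ι] [Field K]
    [AddCommGroup V] [Module K V] {f : ι → V →ₗ[K] K} (hf : LinearIndependent K f) :
    Function.Surjective (LinearMap.pi f) := by
  have hspan := span_flip_eq_top_iff_linearIndependent.mpr
    (hf.map' (LinearMap.ltoFun K V K K) (LinearMap.ker_eq_bot.mpr DFunLike.coe_injective))
  change Submodule.span K (Set.range (LinearMap.pi f)) = ⊤ at hspan
  rwa [← LinearMap.coe_range, Submodule.span_eq, LinearMap.range_eq_top] at hspan

theorem finrank_span_singleton_le {K V : Type*} [DivisionRing K] [AddCommGroup V] [Module K V]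
    (v : V) : finrank K (K ∙ v) ≤ 1 := by
  simpa using finrank_span_le_card (R := K) ({v} : Set V)

theorem not_dense_of_subset_iUnion_span_singleton {𝕜 V ι : Type*} [NontriviallyNormedField 𝕜]
    [CompleteSpace 𝕜] [NormedAddCommGroup V] [NormedSpace 𝕜 V] [FiniteDimensional 𝕜 V]
    [Finite ι] (hV : 1 < finrank 𝕜 V) (v : ι → V) {s : Set V}
    (hs : s ⊆ ⋃ i, (𝕜 ∙ v i : Set V)) : ¬ Dense s := by
  intro hdense
  have : CompleteSpace V := FiniteDimensional.complete 𝕜 V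
  have hclosed (i : ι) : IsClosed (𝕜 ∙ v i : Set V) := Submodule.closed_of_finiteDimensional _
  have hcover : ⋃ i, (𝕜 ∙ v i : Set V) = Set.univ :=
    Set.univ_subset_iff.mp
      (hdense.closure_eq ▸ closure_minimal hs (isClosed_iUnion_of_finite hclosed))
  obtain ⟨i, hi⟩ := nonempty_interior_of_iUnion_of_closed hclosed hcover
  have hrank := finrank_span_singleton_le (K := 𝕜) (v i)
  rw [Submodule.eq_top_of_nonempty_interior' _ hi, finrank_top] at hrank
  omega

theorem continuous_evalFunctional {X : Type*} (E : Submodule ℂ (X → ℂ)) (x : X) :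
    Continuous (evalFunctional E x) :=
  (continuous_apply x).comp continuous_subtype_val

section WeightedComposition

variable {X : Type*} (w : X → ℂ) (φ : X → X)

theorem weightedComp_iterate_apply (n : ℕ) (f : X → ℂ) (x : X) :
    (weightedComp w φ)^[n] f x = (∏ j ∈ range n, w (φ^[j] x)) * f (φ^[n] x) := by
  induction n generalizing x with
  | zero => simp
  | succ n ih =>
    rw [iterate_succ_apply', weightedComp, ih, prod_range_succ', iterate_succ_apply]
    simp only [iterate_succ_apply, iterate_zero_apply]
    ring

def periodMultiplier (p : ℕ) (x : X) : ℂ :=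
  ∏ j ∈ range p, w (φ^[j] x)

theorem periodMultiplier_apply {p : ℕ} {x : X} (hx : IsPeriodicPt φ p x) :
    periodMultiplier w φ p (φ x) = periodMultiplier w φ p x := by
  obtain _ | q := p
  · rfl
  simp only [periodMultiplier, ← iterate_succ_apply]
  rw [prod_range_succ, prod_range_succ' _ q, hx.eq]
  rfl

theorem periodMultiplier_iterate_apply {p : ℕ} {x : X} (hx : IsPeriodicPt φ p x) (k : ℕ) :
    periodMultiplier w φ p (φ^[k] x) = periodMultiplier w φ p x := by
  induction k with
  | zero => rfl
  | succ k ih => rw [iterate_succ_apply', periodMultiplier_apply w φ (hx.apply_iterate k), ih]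

theorem weightedComp_iterate_apply_of_isPeriodicPt {p : ℕ} {x : X} (hx : IsPeriodicPt φ p x)
    (f : X → ℂ) (n : ℕ) :
    (weightedComp w φ)^[n] f x =
      periodMultiplier w φ p x ^ (n / p) * (weightedComp w φ)^[n % p] f x := by
  conv_lhs => rw [← Nat.div_add_mod n p]
  induction n / p with
  | zero => simp
  | succ q ih =>
    rw [Nat.mul_succ, add_right_comm, add_comm, iterate_add_apply, weightedComp_iterate_apply,
      hx.eq, ih, ← periodMultiplier]
    ring

theorem weightedComp_iterate_orbit_mem_span {p : ℕ} {z : X} (hz : IsPeriodicPt φ p z)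
    {ι : Type*} (k : ι → ℕ) (f : X → ℂ) (n : ℕ) :
    (fun i => (weightedComp w φ)^[n] f (φ^[k i] z)) ∈
      ℂ ∙ fun i => (weightedComp w φ)^[n % p] f (φ^[k i] z) := by
  refine Submodule.mem_span_singleton.mpr ⟨periodMultiplier w φ p z ^ (n / p), funext fun i => ?_⟩
  rw [Pi.smul_apply, smul_eq_mul,
    weightedComp_iterate_apply_of_isPeriodicPt w φ (hz.apply_iterate (k i)) f n,
    periodMultiplier_iterate_apply w φ hz]

end WeightedComposition

theorem not_taup_supercyclic_of_periodic_not_fixed_point_general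
    (X : Type*)
    (E : Submodule ℂ (X → ℂ))
    (w : X → ℂ) (φ : X → X)
    (z₁ : X) (hper : ∃ p : ℕ, 2 ≤ p ∧ φ^[p] z₁ = z₁)
    (hindep : LinearIndependent ℂ ![evalFunctional E z₁, evalFunctional E (φ z₁)]) :
    ¬ ∃ f : ↥E, Dense {g : ↥E | ∃ (c : ℂ) (n : ℕ),
      (g : X → ℂ) = c • (weightedComp w φ)^[n] (f : X → ℂ)} := by
  rintro ⟨f, hf⟩
  obtain ⟨p, hp, hz₁⟩ := hper
  set δ : Fin 2 → ↥E →ₗ[ℂ] ℂ := fun i => evalFunctional E (φ^[i] z₁)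
  have hδ : ![evalFunctional E z₁, evalFunctional E (φ z₁)] = δ := by
    ext i : 1
    fin_cases i <;> rfl
  have hdense := (LinearMap.pi_surjective_of_linearIndependent (hδ ▸ hindep)).denseRange
    |>.dense_image (continuous_pi fun i => continuous_evalFunctional E _) hf
  refine not_dense_of_subset_iUnion_span_singleton (by rw [finrank_fin_fun]; norm_num)
    (fun r : Fin p => fun i : Fin 2 => (weightedComp w φ)^[r] f (φ^[i] z₁)) ?_ hdense
  rintro _ ⟨g, ⟨c, n, hg⟩, rfl⟩
  refine Set.mem_iUnion.mpr ⟨⟨n % p, Nat.mod_lt n (by omega)⟩, ?_⟩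
  have hδg : LinearMap.pi δ g = c • fun i : Fin 2 => (weightedComp w φ)^[n] f (φ^[i] z₁) := by
    ext i
    simp [δ, evalFunctional, hg]
  rw [SetLike.mem_coe, hδg]
  exact Submodule.smul_mem _ c (weightedComp_iterate_orbit_mem_span w φ hz₁ _ _ n)

/-- if `X` is compact Hausdorff, `φ` has a periodic point `z₁` which is
not fixed (`φᵖ(z₁) = z₁` for some `p ≥ 2` but `φ(z₁) ≠ z₁`) and `δ_{z₁}, δ_{φ(z₁)}` are
linearly independent on `E ⊆ C(X)`, then `W f = w·(f∘φ)` is not `τ_p`-supercyclic. -/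
theorem not_taup_supercyclic_of_periodic_not_fixed_point
    (X : Type*) [TopologicalSpace X] [CompactSpace X] [T2Space X]
    (E : Submodule ℂ (X → ℂ))
    (hEcont : ∀ g ∈ E, Continuous g)
    (w : X → ℂ) (φ : X → X) (hw : Continuous w) (hφ : Continuous φ)
    (hinv : ∀ g ∈ E, weightedComp w φ g ∈ E)
    (z₁ : X) (hper : ∃ p : ℕ, 2 ≤ p ∧ φ^[p] z₁ = z₁) (hnotfix : φ z₁ ≠ z₁)
    (hindep : LinearIndependent ℂ ![evalFunctional E z₁, evalFunctional E (φ z₁)]) :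
    ¬ ∃ f : ↥E, Dense {g : ↥E | ∃ (c : ℂ) (n : ℕ),
      (g : X → ℂ) = c • (weightedComp w φ)^[n] (f : X → ℂ)} :=
  not_taup_supercyclic_of_periodic_not_fixed_point_general X E w φ z₁ hper hindep
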